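/- arXiv:1912.09218 — 2 statements merged into one kernel-verified Lean document; each statement's English description precedes it below -/
import Mathlib

section
/- Let V, M be n×n matrices with V real symmetric and M Hermitian, and suppose V ≥ M (i.e., V − M is positive semidefinite). Then Tr(V) ≥ Tr(Re M) + ‖Im M‖₁, where Re M and Im M are the entrywise real and imaginary part matrices of M, and ‖·‖₁ is the trace norm. -/
/-!
Write `M = R + i B` with `R = Re M` and `B = Im M`. As `V` is symmetric and `M` Hermitian,
`(V - M)ᵀ = V - R + i B`, so `W = V - R` satisfies `W ∓ i B ≥ 0` with `i B` Hermitian.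
Compressing both inequalities to the diagonal in an eigenbasis of `i B` gives
`|λₖ| ≤ (U⋆ W U)ₖₖ` for its eigenvalues `λₖ`, and summing,
`‖B‖₁ = ‖i B‖₁ = ∑ |λₖ| ≤ Tr W = Tr V - Tr R`.
-/

open ComplexOrder Matrix

/-- The trace norm of a complex matrix: trace of the positive square root of `MᴴM`. -/
noncomputable def traceNorm {n : ℕ} (M : Matrix (Fin n) (Fin n) ℂ) : ℝ :=
  (((Matrix.posSemidef_conjTranspose_mul_self M).1.eigenvectorUnitary : Matrix (Fin n) (Fin n) ℂ) *
      diagonal (((↑) : ℝ → ℂ) ∘ (√·) ∘ (Matrix.posSemidef_conjTranspose_mul_self M).1.eigenvalues) *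
      (star (Matrix.posSemidef_conjTranspose_mul_self M).1.eigenvectorUnitary :
        Matrix (Fin n) (Fin n) ℂ)).trace.re

namespace Matrix

section RCLike

variable {n 𝕜 : Type*} [RCLike 𝕜] [Fintype n] [DecidableEq n]

theorem IsHermitian.trace_cfc {A : Matrix n n 𝕜} (hA : A.IsHermitian) (f : ℝ → ℝ) :
    (cfc f A).trace = ∑ i, (f (hA.eigenvalues i) : 𝕜) := by
  rw [hA.cfc_eq, IsHermitian.cfc, Unitary.conjStarAlgAut_apply, trace_mul_cycle,
    Unitary.coe_star_mul_self, one_mul, trace_diagonal]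
  rfl

theorem sum_abs_le_re_trace_of_posSemidef_sub_add_diagonal {X : Matrix n n 𝕜} {d : n → ℝ}
    (h₁ : (X - diagonal (RCLike.ofReal ∘ d)).PosSemidef)
    (h₂ : (X + diagonal (RCLike.ofReal ∘ d)).PosSemidef) :
    ∑ i, |d i| ≤ RCLike.re X.trace := by
  simp only [trace, diag_apply, map_sum]
  refine Finset.sum_le_sum fun i _ => abs_le.mpr ⟨?_, ?_⟩
  · have h := (RCLike.nonneg_iff.mp (h₂.diag_nonneg (i := i))).1
    simp only [add_apply, diagonal_apply_eq, Function.comp_apply, map_add, RCLike.ofReal_re] at h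
    linarith
  · have h := (RCLike.nonneg_iff.mp (h₁.diag_nonneg (i := i))).1
    simp only [sub_apply, diagonal_apply_eq, Function.comp_apply, map_sub, RCLike.ofReal_re] at h
    linarith

theorem IsHermitian.sum_abs_eigenvalues_le_re_trace {C W : Matrix n n 𝕜} (hC : C.IsHermitian)
    (h₁ : (W - C).PosSemidef) (h₂ : (W + C).PosSemidef) :
    ∑ i, |hC.eigenvalues i| ≤ RCLike.re W.trace := by
  set U : Matrix n n 𝕜 := ↑hC.eigenvectorUnitary
  have hdiag := hC.conjStarAlgAut_star_eigenvectorUnitary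
  rw [Unitary.conjStarAlgAut_star_apply] at hdiag
  have conj_posSemidef (X : Matrix n n 𝕜) (hX : X.PosSemidef) : (star U * X * U).PosSemidef := by
    simpa only [star_eq_conjTranspose] using hX.conjTranspose_mul_mul_same U
  have := sum_abs_le_re_trace_of_posSemidef_sub_add_diagonal (X := star U * W * U)
    (by rw [← hdiag, ← Matrix.sub_mul, ← Matrix.mul_sub]; exact conj_posSemidef _ h₁)
    (by rw [← hdiag, ← Matrix.add_mul, ← Matrix.mul_add]; exact conj_posSemidef _ h₂)
  rwa [trace_mul_cycle, Unitary.mul_star_self_of_mem hC.eigenvectorUnitary.2, one_mul] at this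

end RCLike

section Complex

variable {n : Type*} {M : Matrix n n ℂ}

theorem re_add_I_smul_im (M : Matrix n n ℂ) :
    of (fun i j => ((M i j).re : ℂ)) + Complex.I • of (fun i j => ((M i j).im : ℂ)) = M := by
  ext i j
  simp [mul_comm Complex.I]

theorem IsHermitian.transpose_eq_re_sub_I_smul_im (hM : M.IsHermitian) :
    Mᵀ = of (fun i j => ((M i j).re : ℂ)) - Complex.I • of (fun i j => ((M i j).im : ℂ)) := by
  ext i j
  rw [transpose_apply, ← hM.apply j i]
  apply Complex.ext <;> simp

theorem IsHermitian.isHermitian_I_smul_im (hM : M.IsHermitian) :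
    (Complex.I • of (fun i j => ((M i j).im : ℂ))).IsHermitian := by
  ext i j
  simp only [conjTranspose_apply, smul_apply, of_apply]
  rw [← hM.apply j i]
  simp

end Complex

end Matrix

open scoped MatrixOrder in
theorem traceNorm_eq_re_trace_cfc_sqrt {n : ℕ} (A : Matrix (Fin n) (Fin n) ℂ) :
    traceNorm A = (cfc Real.sqrt (Aᴴ * A)).trace.re := by
  rw [(posSemidef_conjTranspose_mul_self A).1.cfc_eq]
  rfl

theorem traceNorm_smul_of_norm_eq_one {n : ℕ} {c : ℂ} (hc : ‖c‖ = 1)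
    (A : Matrix (Fin n) (Fin n) ℂ) : traceNorm (c • A) = traceNorm A := by
  have hcc : star c * c = 1 := by
    rw [Complex.star_def, ← Complex.normSq_eq_conj_mul_self, Complex.normSq_eq_norm_sq, hc]
    norm_num
  rw [traceNorm_eq_re_trace_cfc_sqrt, traceNorm_eq_re_trace_cfc_sqrt, conjTranspose_smul,
    smul_mul_smul_comm, hcc, one_smul]

open scoped MatrixOrder in
theorem Matrix.IsHermitian.traceNorm_eq_sum_abs_eigenvalues {n : ℕ}
    {C : Matrix (Fin n) (Fin n) ℂ} (hC : C.IsHermitian) :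
    traceNorm C = ∑ i, |hC.eigenvalues i| := by
  have hsqrt : cfc Real.sqrt (Cᴴ * C) = cfc (fun x : ℝ => |x|) C := by
    rw [hC.eq, ← sq, ← cfc_comp_pow ..]
    simp_rw [Real.sqrt_sq_eq_abs]
  rw [traceNorm_eq_re_trace_cfc_sqrt, hsqrt, hC.trace_cfc, Complex.re_sum]
  simp

theorem trace_ge_reTrace_add_traceNorm_im_general (n : ℕ)
    (V M : Matrix (Fin n) (Fin n) ℂ)
    (hVsymm : Vᵀ = V)
    (hM : M.IsHermitian) (hVM : (V - M).PosSemidef) :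
    (∑ i, (M i i).re) + traceNorm (Matrix.of fun i j => (((M i j).im : ℝ) : ℂ))
      ≤ V.trace.re := by
  set R : Matrix (Fin n) (Fin n) ℂ := of fun i j => ((M i j).re : ℂ)
  set B : Matrix (Fin n) (Fin n) ℂ := of fun i j => ((M i j).im : ℂ)
  have hC : (Complex.I • B).IsHermitian := hM.isHermitian_I_smul_im
  have h₁ : (V - R - Complex.I • B).PosSemidef := by
    rwa [sub_sub, re_add_I_smul_im]
  have h₂ : (V - R + Complex.I • B).PosSemidef := by
    rw [sub_add, ← hM.transpose_eq_re_sub_I_smul_im, ← hVsymm, ← transpose_sub]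
    exact hVM.transpose
  have htr : (V - R).trace.re = V.trace.re - ∑ i, (M i i).re := by
    simp [R, trace, Complex.re_sum]
  rw [← traceNorm_smul_of_norm_eq_one Complex.norm_I, hC.traceNorm_eq_sum_abs_eigenvalues]
  have hbound : _ ≤ (V - R).trace.re := hC.sum_abs_eigenvalues_le_re_trace h₁ h₂
  linarith

/-- If `V` is real symmetric, `M` is Hermitian and `V - M` is positive semidefinite,
then `Tr V ≥ Tr(Re M) + ‖Im M‖₁`. -/
theorem trace_ge_reTrace_add_traceNorm_im (n : ℕ)
    (V M : Matrix (Fin n) (Fin n) ℂ)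
    (hVreal : ∀ i j, (V i j).im = 0) (hVsymm : Vᵀ = V)
    (hM : M.IsHermitian) (hVM : (V - M).PosSemidef) :
    (∑ i, (M i i).re) + traceNorm (Matrix.of fun i j => (((M i j).im : ℝ) : ℂ))
      ≤ V.trace.re :=
  trace_ge_reTrace_add_traceNorm_im_general n V M hVsymm hM hVM
end

section
/- Let d ≥ 2, let ρ be a Hermitian positive semidefinite n×n matrix, let X₁,…,X_d be Hermitian n×n matrices with X_{d+1} := X₁, let Z be the d×d matrix with Z_{jk} = Tr(ρ X_j X_k), and for a binary vector α ∈ {0,1}^d let U_α = (−1)^{α_d}|d⟩⟨1| + Σ_{j=1}^{d−1} (−1)^{α_j}|j⟩⟨j+1|. Then Tr(Re Z) + Tr(U_α · Im Z) = (1/2) Σ_{j=1}^{d} Tr((X_j + (−1)^{α_j} i X_{j+1}) ρ (X_j + (−1)^{α_j} i X_{j+1})†). -/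
open ComplexOrder Matrix

lemma cyc_trace_aux (n : ℕ) (P ρ Q : Matrix (Fin n) (Fin n) ℂ) :
    (P * ρ * Q).trace = (ρ * Q * P).trace := by
  rw [Matrix.trace_mul_comm, ← mul_assoc, Matrix.trace_mul_comm, ← mul_assoc]

lemma conj_trace_aux (n : ℕ) (ρ A B : Matrix (Fin n) (Fin n) ℂ)
    (hρ : ρᴴ = ρ) (hA : Aᴴ = A) (hB : Bᴴ = B) :
    (starRingEnd ℂ) (ρ * A * B).trace = (ρ * B * A).trace := by
  have := Matrix.trace_conjTranspose (ρ * A * B)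
  rw [Matrix.conjTranspose_mul, Matrix.conjTranspose_mul, hρ, hA, hB] at this
  rw [show (starRingEnd ℂ) (ρ * A * B).trace = star (ρ * A * B).trace from rfl, ← this,
    ← Matrix.trace_mul_cycle, mul_assoc]

lemma expand_trace_aux (n : ℕ) (ρ A B : Matrix (Fin n) (Fin n) ℂ)
    (hρ : ρᴴ = ρ) (hA : Aᴴ = A) (hB : Bᴴ = B) (c : ℂ) (hc : star c = c) (hc2 : c * c = 1) :
    ((A + (c * Complex.I) • B) * ρ * (A + (c * Complex.I) • B)ᴴ).trace
      = (ρ * A * A).trace + (ρ * B * B).trace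
        + (c * Complex.I) * ((ρ * A * B).trace - (ρ * B * A).trace) := by
  have hct : (A + (c * Complex.I) • B)ᴴ = A + (-(c * Complex.I)) • B := by
    rw [Matrix.conjTranspose_add, Matrix.conjTranspose_smul, hA, hB]
    congr 1
    rw [star_mul', hc, Complex.star_def, Complex.conj_I]
    ring
  rw [hct]
  have cyc1 := cyc_trace_aux n A ρ A
  have cyc2 := cyc_trace_aux n B ρ B
  have cyc3 := cyc_trace_aux n A ρ B
  have cyc4 := cyc_trace_aux n B ρ A
  simp only [Matrix.add_mul, Matrix.mul_add, Matrix.smul_mul, Matrix.mul_smul,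
    Matrix.trace_add, Matrix.trace_smul, smul_smul, smul_eq_mul, cyc1, cyc2, cyc3, cyc4]
  have hI : c * Complex.I * (c * Complex.I) = -1 := by
    rw [show c * Complex.I * (c * Complex.I) = c * c * (Complex.I * Complex.I) by ring,
      hc2, Complex.I_mul_I]
    ring
  linear_combination (-(ρ * B * B).trace) * hI

/-- `Tr(Re Z) + Tr(U_α Im Z) = (1/2) Σ_j Tr((X_j + (-1)^{α_j} i X_{j+1}) ρ (X_j + (-1)^{α_j} i X_{j+1})ᴴ)`
with cyclic indices. -/
theorem trace_reZ_add_trace_Ualpha_imZ (d n : ℕ) (hd : 2 ≤ d)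
    (ρ : Matrix (Fin n) (Fin n) ℂ) (hρ : ρ.PosSemidef)
    (X : Fin d → Matrix (Fin n) (Fin n) ℂ) (hX : ∀ j, (X j).IsHermitian)
    (α : Fin d → Fin 2) :
    let succ : Fin d → Fin d := fun j =>
      ⟨((j : ℕ) + 1) % d, Nat.mod_lt _ (by omega)⟩
    let Z : Matrix (Fin d) (Fin d) ℂ := Matrix.of fun j k => (ρ * X j * X k).trace
    let ImZ : Matrix (Fin d) (Fin d) ℂ := Matrix.of fun j k => (((Z j k).im : ℝ) : ℂ)
    let Uα : Matrix (Fin d) (Fin d) ℂ := Matrix.of fun a b =>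
      if b = succ a then (-1 : ℂ) ^ ((α a : ℕ)) else 0
    ((∑ j, ((Z j j).re : ℂ)) + (Uα * ImZ).trace)
      = (1 / 2 : ℂ) * ∑ j,
          ((X j + ((-1 : ℂ) ^ ((α j : ℕ)) * Complex.I) • X (succ j)) * ρ *
            (X j + ((-1 : ℂ) ^ ((α j : ℕ)) * Complex.I) • X (succ j))ᴴ).trace := by
  intro succ Z ImZ Uα
  haveI : NeZero d := ⟨by omega⟩
  have h1 : (1 : Fin d).val = 1 := by
    rw [Fin.val_one']
    exact Nat.mod_eq_of_lt (by omega)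
  have hsucc : ∀ j : Fin d, succ j = j + 1 := by
    intro j
    apply Fin.ext
    rw [Fin.add_def, h1]
  have hconj : ∀ j k : Fin d, (starRingEnd ℂ) (Z j k) = Z k j := by
    intro j k
    exact conj_trace_aux n ρ (X j) (X k) hρ.1 (hX j) (hX k)
  have hreal : ∀ j : Fin d, ((Z j j).re : ℂ) = Z j j := by
    intro j
    have := hconj j j
    rw [Complex.conj_eq_iff_re] at this
    exact this
  -- compute the Uα trace
  have hU : (Uα * ImZ).trace = ∑ a : Fin d, (-1 : ℂ) ^ ((α a : ℕ)) * (((Z (succ a) a).im : ℝ) : ℂ) := by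
    rw [Matrix.trace]
    apply Finset.sum_congr rfl
    intro a _
    rw [Matrix.diag_apply, Matrix.mul_apply]
    rw [Finset.sum_eq_single (succ a)]
    · simp [Uα, ImZ]
    · intro b _ hb
      simp [Uα, hb]
    · simp
  -- rewrite RHS using the expansion lemma
  have hRHS : ∀ j : Fin d,
      ((X j + ((-1 : ℂ) ^ ((α j : ℕ)) * Complex.I) • X (succ j)) * ρ *
          (X j + ((-1 : ℂ) ^ ((α j : ℕ)) * Complex.I) • X (succ j))ᴴ).trace
        = Z j j + Z (succ j) (succ j)
          + ((-1 : ℂ) ^ ((α j : ℕ)) * Complex.I) * (Z j (succ j) - Z (succ j) j) := by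
    intro j
    exact expand_trace_aux n ρ (X j) (X (succ j)) hρ.1 (hX j) (hX (succ j)) _
      (by rcases Nat.even_or_odd (α j : ℕ) with h | h
          · simp [h.neg_one_pow]
          · simp [h.neg_one_pow])
      (by rcases Nat.even_or_odd (α j : ℕ) with h | h
          · simp [h.neg_one_pow]
          · simp [h.neg_one_pow])
  have hre : ∀ j : Fin d, Z (succ j) j = (starRingEnd ℂ) (Z j (succ j)) :=
    fun j => (hconj j (succ j)).symm
  have hterm : ∀ j : Fin d,
      (1 / 2 : ℂ) * (Z j j + Z (succ j) (succ j)
        + ((-1 : ℂ) ^ ((α j : ℕ)) * Complex.I) * (Z j (succ j) - Z (succ j) j))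
      = (1/2 : ℂ) * Z j j + (1/2 : ℂ) * Z (succ j) (succ j)
        + (-1 : ℂ) ^ ((α j : ℕ)) * (((Z (succ j) j).im : ℝ) : ℂ) := by
    intro j
    have h1 : Z j (succ j) - Z (succ j) j = 2 * Complex.I * (((Z j (succ j)).im : ℝ) : ℂ) := by
      rw [hre j, Complex.sub_conj]
      push_cast
      ring
    have h2 : (((Z (succ j) j).im : ℝ) : ℂ) = -(((Z j (succ j)).im : ℝ) : ℂ) := by
      rw [hre j]
      simp
    rw [h1, h2]
    have hII : Complex.I * Complex.I = -1 := Complex.I_mul_I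
    linear_combination ((-1 : ℂ) ^ ((α j : ℕ)) * (((Z j (succ j)).im : ℝ) : ℂ)) * hII
  have hreindex : ∑ j : Fin d, (1/2 : ℂ) * Z (succ j) (succ j)
      = ∑ j : Fin d, (1/2 : ℂ) * Z j j := by
    simp only [hsucc]
    exact Fintype.sum_equiv (Equiv.addRight (1 : Fin d)) _ _ (fun j => rfl)
  simp only [hRHS, hU]
  have hL : (∑ j : Fin d, ((Z j j).re : ℂ)) = ∑ j : Fin d, Z j j :=
    Finset.sum_congr rfl (fun j _ => hreal j)
  rw [hL, Finset.mul_sum, ← Finset.sum_add_distrib]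
  rw [Finset.sum_congr rfl (fun j (_ : j ∈ Finset.univ) =>
    (show Z j j + (-1 : ℂ) ^ ((α j : ℕ)) * (((Z (succ j) j).im : ℝ) : ℂ)
        = (1/2 : ℂ) * Z j j + (1/2 : ℂ) * Z j j
          + (-1 : ℂ) ^ ((α j : ℕ)) * (((Z (succ j) j).im : ℝ) : ℂ) by ring))]
  rw [Finset.sum_congr rfl (fun j (_ : j ∈ Finset.univ) => hterm j)]
  rw [Finset.sum_add_distrib, Finset.sum_add_distrib, Finset.sum_add_distrib,
    Finset.sum_add_distrib, hreindex]
end
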